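/- arXiv:1507.06900 — 5 statements merged into one kernel-verified Lean document; each statement's English description precedes it below -/
import Mathlib

section
/- Let p, q ∈ ℝ^m be probability distributions such that q has full rank, H(p) < H(q), and q ≠ (1/m,…,1/m). Then there exist δ ∈ (0, min_i q_i) and N ∈ ℕ such that, setting a_i := q_i − δ and letting q_{AB} be the corresponding bipartite extension of q with parameter n, the following holds for all n ≥ N: H_α(p ⊗ q_B) < H_α(q_{AB}) for all real α ≥ 1, and also H_∞(p ⊗ q_B) < H_∞(q_{AB}). -/
open scoped BigOperators

/-- `p` is a probability distribution on the finite type `ι`. -/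
def IsProbDist {ι : Type*} [Fintype ι] (p : ι → ℝ) : Prop :=
  (∀ i, 0 ≤ p i) ∧ ∑ i, p i = 1

/-- `p` is a probability distribution with strictly positive entries. -/
def IsPosProbDist {ι : Type*} [Fintype ι] (p : ι → ℝ) : Prop :=
  (∀ i, 0 < p i) ∧ ∑ i, p i = 1

/-- `p` majorizes `q`: for every `k`, the sum of the `k` largest entries of `p` is at least
the sum of the `k` largest entries of `q`.  For nonnegative vectors this is equivalent to:
for every set `A` of indices of `q` there is a set `B` of indices of `p` with `|B| ≤ |A|`
whose `p`-sum dominates the `q`-sum over `A`. -/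
def Majorizes {ι κ : Type*} [Fintype ι] [Fintype κ] (p : ι → ℝ) (q : κ → ℝ) : Prop :=
  ∀ A : Finset κ, ∃ B : Finset ι, B.card ≤ A.card ∧ ∑ j ∈ A, q j ≤ ∑ i ∈ B, p i

/-- Kronecker (tensor) product of two vectors. -/
def kron {ι κ : Type*} (p : ι → ℝ) (q : κ → ℝ) : ι × κ → ℝ :=
  fun x => p x.1 * q x.2

/-- Shannon entropy (natural logarithm; note `Real.log 0 = 0`, so `0 log 0 = 0`). -/
noncomputable def shannonEntropy {ι : Type*} [Fintype ι] (p : ι → ℝ) : ℝ :=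
  -∑ i, p i * Real.log (p i)

open Classical in
/-- The number of nonzero entries of `p`. -/
noncomputable def distRank {ι : Type*} [Fintype ι] (p : ι → ℝ) : ℕ :=
  (Finset.univ.filter fun i => p i ≠ 0).card

/-- Marginal of a `k`-partite distribution on its `i`-th factor. -/
noncomputable def marginal {k : ℕ} {d : Fin k → ℕ} (r : (∀ i, Fin (d i)) → ℝ) (i : Fin k) :
    Fin (d i) → ℝ :=
  fun b => ∑ y : ∀ j, Fin (d j), if y i = b then r y else 0

open Classical in
/-- Rényi entropy of order `α` (with `H₁` being the Shannon entropy). -/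
noncomputable def renyi {ι : Type*} [Fintype ι] (α : ℝ) (p : ι → ℝ) : ℝ :=
  if α = 1 then shannonEntropy p
  else (Real.sign α / (1 - α)) * Real.log (∑ i, p i ^ α)

/-- Min-entropy `H_∞(p) = -log (max_i p_i)`. -/
noncomputable def renyiInf {ι : Type*} [Fintype ι] (p : ι → ℝ) : ℝ :=
  -Real.log (⨆ i, p i)

/-- Burg entropy `H_Burg(p) = (1/m) ∑ log p_i`. -/
noncomputable def burg {ι : Type*} [Fintype ι] (p : ι → ℝ) : ℝ :=
  (1 / (Fintype.card ι : ℝ)) * ∑ i, Real.log (p i)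

open Classical in
/-- Rényi entropy as an extended real: it is `-∞` for `α < 0` when `p` has a zero entry. -/
noncomputable def renyiE {ι : Type*} [Fintype ι] (α : ℝ) (p : ι → ℝ) : EReal :=
  if α < 0 ∧ ∃ i, p i = 0 then ⊥ else (renyi α p : EReal)

open Classical in
/-- Burg entropy as an extended real: it is `-∞` when `p` has a zero entry. -/
noncomputable def burgE {ι : Type*} [Fintype ι] (p : ι → ℝ) : EReal :=
  if ∃ i, p i = 0 then ⊥ else (burg p : EReal)

/-- `p` trumps `q`: there is a catalyst distribution `r` with `p ⊗ r ≻ q ⊗ r`. -/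
def Trumps {ι κ : Type*} [Fintype ι] [Fintype κ] (p : ι → ℝ) (q : κ → ℝ) : Prop :=
  ∃ (n : ℕ) (r : Fin n → ℝ), IsProbDist r ∧ Majorizes (kron p r) (kron q r)

/-- The bipartite extension `q_{AB}` of `q` with parameters `a i ∈ [0, q i]` and `n`:
the `m × (n+1)` matrix whose first column is `(q i - a i)` and whose remaining `n`
columns all equal `(a i / n)`. -/
noncomputable def qAB {m : ℕ} (q a : Fin m → ℝ) (n : ℕ) : Fin m × Fin (n + 1) → ℝ :=
  fun x => if x.2 = 0 then q x.1 - a x.1 else a x.1 / n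

/-- The `B`-marginal `(1 - a, a/n, …, a/n)` of `qAB`, where `a = ∑ i, a i`. -/
noncomputable def qBext {m : ℕ} (a : Fin m → ℝ) (n : ℕ) : Fin (n + 1) → ℝ :=
  fun j => if j = 0 then 1 - ∑ i, a i else (∑ i, a i) / n

/-- Symmetry of an entropy-like functional on positive distributions. -/
def SymmetricS (S : ∀ n : ℕ, (Fin n → ℝ) → ℝ) : Prop :=
  ∀ (n : ℕ) (p : Fin n → ℝ), IsPosProbDist p →
    ∀ σ : Equiv.Perm (Fin n), S n (p ∘ σ) = S n p

/-- Additivity: `S(p ⊗ q) = S(p) + S(q)`. -/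
def AdditiveS (S : ∀ n : ℕ, (Fin n → ℝ) → ℝ) : Prop :=
  ∀ (m n : ℕ) (p : Fin m → ℝ) (q : Fin n → ℝ), IsPosProbDist p → IsPosProbDist q →
    S (m * n) (fun x => kron p q (finProdFinEquiv.symm x)) = S m p + S n q

/-- Subadditivity: `S(p_{AB}) ≤ S(p_A ⊗ p_B)` for bipartite distributions. -/
def SubadditiveS (S : ∀ n : ℕ, (Fin n → ℝ) → ℝ) : Prop :=
  ∀ (m n : ℕ) (P : Fin m × Fin n → ℝ), IsPosProbDist P →
    S (m * n) (fun x => P (finProdFinEquiv.symm x)) ≤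
      S (m * n) (fun x =>
        kron (fun i => ∑ j, P (i, j)) (fun j => ∑ i, P (i, j)) (finProdFinEquiv.symm x))

/-- Continuity of `S` on each simplex of positive distributions. -/
def ContinuousS (S : ∀ n : ℕ, (Fin n → ℝ) → ℝ) : Prop :=
  ∀ n : ℕ, ContinuousOn (S n) {p : Fin n → ℝ | IsPosProbDist p}

open Real Filter Topology

/-!
With `u = q - δ` and `v = (∑ u) • p = (1 - mδ) • p`, both `q_{AB}` and `p ⊗ q_B` consist of a
first column (`δ` everywhere, resp. `δ • (m • p)`) and `n` copies of `u / n`, resp. `v / n`, so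
`∑ x^α = ∑ (first column)^α + n^(1-α) ∑ (u or v)^α`. Since `H(m • p) = m (H(p) - log m) < 0`,
the tangent bound `∑ y^α ≥ ∑ y - (α - 1) H(y)` gives the first column of `p ⊗ q_B` an advantage
of at least `δ^α (α - 1) |H(m • p)|`. For small `δ`, continuity turns `H(p) < H(q)` into
`H(v) < H(u)`; as `α ↦ ∑ u^α - ∑ v^α` vanishes at `1` with derivative `H(v) - H(u)`, the remaining
columns also favour `p ⊗ q_B` on some `(1, α₁)`, while for `α ≥ α₁` the factor `n^(1-α)` makes
them negligible once `n` is large. Shannon and min-entropy are compared directly.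
-/

section Entropy

variable {ι : Type*} [Fintype ι]

lemma shannonEntropy_eq_sum_negMulLog (x : ι → ℝ) :
    shannonEntropy x = ∑ i, negMulLog (x i) := by
  simp [shannonEntropy, negMulLog_eq_neg]

lemma continuous_shannonEntropy : Continuous fun x : ι → ℝ => shannonEntropy x := by
  unfold shannonEntropy
  fun_prop

lemma shannonEntropy_const_mul (c : ℝ) (x : ι → ℝ) :
    shannonEntropy (fun i => c * x i) = c * shannonEntropy x + negMulLog c * ∑ i, x i := by
  simp only [shannonEntropy_eq_sum_negMulLog, negMulLog_mul, Finset.sum_add_distrib,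
    ← Finset.mul_sum, ← Finset.sum_mul]
  ring

lemma shannonEntropy_le_card_sub_sum {x : ι → ℝ} (hx : ∀ i, 0 ≤ x i) :
    shannonEntropy x ≤ Fintype.card ι - ∑ i, x i := by
  rw [shannonEntropy_eq_sum_negMulLog]
  calc _ ≤ ∑ i, (1 - x i) := Finset.sum_le_sum fun i _ => negMulLog_le_one_sub_self (hx i)
    _ = _ := by simp [Finset.sum_sub_distrib]

lemma exists_one_lt_of_shannonEntropy_neg {x : ι → ℝ} (hx : ∀ i, 0 ≤ x i)
    (h : shannonEntropy x < 0) : ∃ i, 1 < x i := by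
  by_contra! hle
  rw [shannonEntropy_eq_sum_negMulLog] at h
  exact h.not_ge (Finset.sum_nonneg fun i _ => negMulLog_nonneg (hx i) (hle i))

lemma add_mul_mul_log_le_rpow {x : ℝ} (hx : 0 ≤ x) (α : ℝ) :
    x + (α - 1) * (x * log x) ≤ x ^ α := by
  rcases hx.eq_or_lt with rfl | hx
  · simpa using rpow_nonneg le_rfl α
  calc x + (α - 1) * (x * log x) = x * ((α - 1) * log x + 1) := by ring
    _ ≤ x * exp ((α - 1) * log x) := by gcongr; exact add_one_le_exp _
    _ = x ^ α := by
      rw [rpow_def_of_pos hx, show log x * α = log x + (α - 1) * log x by ring, exp_add,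
        exp_log hx]

lemma sum_sub_mul_shannonEntropy_le_sum_rpow {x : ι → ℝ} (hx : ∀ i, 0 ≤ x i) (α : ℝ) :
    ∑ i, x i - (α - 1) * shannonEntropy x ≤ ∑ i, x i ^ α := by
  calc ∑ i, x i - (α - 1) * shannonEntropy x = ∑ i, (x i + (α - 1) * (x i * log (x i))) := by
        simp [shannonEntropy, Finset.sum_add_distrib, Finset.mul_sum]
    _ ≤ _ := Finset.sum_le_sum fun i _ => add_mul_mul_log_le_rpow (hx i) α

lemma hasDerivAt_sum_rpow_one {x : ι → ℝ} (hx : ∀ i, 0 ≤ x i) :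
    HasDerivAt (fun α : ℝ => ∑ i, x i ^ α) (-shannonEntropy x) 1 := by
  rw [shannonEntropy, neg_neg]
  refine HasDerivAt.fun_sum fun i _ => ?_
  rcases (hx i).eq_or_lt with h | h
  · rw [← h, zero_mul]
    refine (hasDerivAt_const 1 (0 : ℝ)).congr_of_eventuallyEq ?_
    filter_upwards [eventually_ne_nhds one_ne_zero] with α hα using zero_rpow hα
  · simpa using (hasStrictDerivAt_const_rpow h 1).hasDerivAt

lemma eventually_lt_of_hasDerivAt_neg {f : ℝ → ℝ} {f' x : ℝ} (hf : HasDerivAt f f' x)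
    (hf' : f' < 0) : ∀ᶠ y in 𝓝[>] x, f y < f x := by
  have hslope : ∀ᶠ y in 𝓝[>] x, slope f x y < 0 :=
    (hasDerivAt_iff_tendsto_slope.1 hf).eventually (eventually_lt_nhds hf')
      |>.filter_mono (nhdsWithin_mono _ fun y hy => ne_of_gt hy)
  filter_upwards [hslope, self_mem_nhdsWithin] with y hy hxy
  rw [slope_def_field, div_lt_iff₀ (sub_pos.2 hxy), zero_mul] at hy
  linarith

lemma eventually_sum_rpow_lt {κ : Type*} [Fintype κ] {u : ι → ℝ} {v : κ → ℝ}
    (hu : ∀ i, 0 ≤ u i) (hv : ∀ j, 0 ≤ v j) (hsum : ∑ i, u i = ∑ j, v j)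
    (hH : shannonEntropy v < shannonEntropy u) :
    ∀ᶠ α : ℝ in 𝓝[>] 1, ∑ i, u i ^ α < ∑ j, v j ^ α := by
  have := eventually_lt_of_hasDerivAt_neg
    ((hasDerivAt_sum_rpow_one hu).fun_sub (hasDerivAt_sum_rpow_one hv)) (by linarith)
  filter_upwards [this] with α hα
  simpa only [rpow_one, hsum, sub_self, sub_neg] using hα

lemma shannonEntropy_card_mul_neg {p q : ι → ℝ} (hp : ∑ i, p i = 1)
    (hq : IsProbDist q) (hH : shannonEntropy p < shannonEntropy q) :
    shannonEntropy (fun i => (Fintype.card ι : ℝ) * p i) < 0 := by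
  have hgibbs := shannonEntropy_le_card_sub_sum (x := fun i => (Fintype.card ι : ℝ) * q i)
    fun i => mul_nonneg (Nat.cast_nonneg _) (hq.1 i)
  rw [← Finset.mul_sum, hq.2, mul_one, sub_self, shannonEntropy_const_mul, hq.2] at hgibbs
  rw [shannonEntropy_const_mul, hp]
  have : (0 : ℝ) < Fintype.card ι := by
    obtain ⟨i, -⟩ := Finset.exists_ne_zero_of_sum_ne_zero (hq.2 ▸ one_ne_zero)
    exact_mod_cast Fintype.card_pos_iff.2 ⟨i⟩
  linarith [mul_lt_mul_of_pos_left hH this]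

lemma exists_shannonEntropy_lt_shift [Nonempty ι] {p q : ι → ℝ}
    (hq : ∀ i, 0 < q i) (hq1 : ∑ i, q i = 1) (hH : shannonEntropy p < shannonEntropy q) :
    ∃ δ, 0 < δ ∧ δ < ⨅ i, q i ∧
      shannonEntropy (fun i => (∑ j, (q j - δ)) * p i) < shannonEntropy (fun i => q i - δ) := by
  obtain ⟨i₀, hi₀⟩ := exists_eq_ciInf_of_finite (f := q)
  have hcont : Continuous fun δ : ℝ =>
      shannonEntropy (fun i => q i - δ) - shannonEntropy (fun i => (∑ j, (q j - δ)) * p i) :=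
    (continuous_shannonEntropy.comp (by fun_prop)).sub
      (continuous_shannonEntropy.comp (by fun_prop))
  have hH0 : ∀ᶠ δ in 𝓝 (0 : ℝ), 0 < shannonEntropy (fun i => q i - δ) -
      shannonEntropy (fun i => (∑ j, (q j - δ)) * p i) :=
    hcont.continuousAt.eventually (eventually_gt_nhds (by simpa [hq1] using hH))
  have hinf : ∀ᶠ δ in 𝓝 (0 : ℝ), δ < ⨅ i, q i := eventually_lt_nhds (hi₀ ▸ hq i₀)
  obtain ⟨δ, ⟨hδH, hδq⟩, hδ⟩ :=
    (((hH0.and hinf).filter_mono nhdsWithin_le_nhds).and self_mem_nhdsWithin).exists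
      (f := 𝓝[>] (0 : ℝ))
  exact ⟨δ, hδ, hδq, sub_pos.1 hδH⟩

end Entropy

lemma renyi_lt_renyi_of_sum_rpow_lt {ι κ : Type*} [Fintype ι] [Fintype κ] {x : ι → ℝ}
    {x' : κ → ℝ} {α : ℝ} (hα : 1 < α) (hx : 0 < ∑ i, x i ^ α)
    (h : ∑ i, x i ^ α < ∑ j, x' j ^ α) : renyi α x' < renyi α x := by
  rw [renyi, renyi, if_neg hα.ne', if_neg hα.ne', sign_of_pos (by linarith)]
  exact mul_lt_mul_of_neg_left (log_lt_log hx h) (div_neg_of_pos_of_neg one_pos (by linarith))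

lemma IsProbDist.le_one {ι : Type*} [Fintype ι] {p : ι → ℝ} (hp : IsProbDist p) (i : ι) :
    p i ≤ 1 :=
  hp.2 ▸ Finset.single_le_sum (fun j _ => hp.1 j) (Finset.mem_univ i)

section BipartiteExtension

variable {m : ℕ}

lemma kron_qBext (p a : Fin m → ℝ) (n : ℕ) :
    kron p (qBext a n) = qAB p (fun i => (∑ j, a j) * p i) n := by
  ext ⟨i, j⟩
  simp only [kron, qBext, qAB]
  split_ifs <;> ring

lemma sum_comp_qAB (f : ℝ → ℝ) (r b : Fin m → ℝ) (n : ℕ) :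
    ∑ x, f (qAB r b n x) = ∑ i, f (r i - b i) + n * ∑ i, f (b i / n) := by
  simp [qAB, Fintype.sum_prod_type, Fin.sum_univ_succ, Fin.succ_ne_zero, Finset.sum_add_distrib,
    Finset.mul_sum]

lemma sum_rpow_qAB {r b : Fin m → ℝ} (hb : ∀ i, 0 ≤ b i) {n : ℕ} (hn : 0 < n) (α : ℝ) :
    ∑ x, qAB r b n x ^ α = ∑ i, (r i - b i) ^ α + (n : ℝ) ^ (1 - α) * ∑ i, b i ^ α := by
  rw [sum_comp_qAB (· ^ α), Finset.mul_sum, Finset.mul_sum]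
  congr 1
  refine Finset.sum_congr rfl fun i _ => ?_
  rw [div_rpow (hb i) n.cast_nonneg, rpow_sub (by positivity), rpow_one]
  field_simp

lemma shannonEntropy_qAB (r b : Fin m → ℝ) {n : ℕ} (hn : 0 < n) :
    shannonEntropy (qAB r b n) = shannonEntropy (fun i => r i - b i) + shannonEntropy b
      + (∑ i, b i) * log n := by
  have hscale (x : ℝ) : (n : ℝ) * negMulLog (x / n) = negMulLog x + x * log n := by
    rw [div_eq_mul_inv, negMulLog_mul]
    simp only [negMulLog, log_inv]
    field_simp
  simp only [shannonEntropy_eq_sum_negMulLog, sum_comp_qAB negMulLog, Finset.mul_sum, hscale,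
    Finset.sum_add_distrib, Finset.sum_mul]
  ring

end BipartiteExtension

lemma eventually_forall_rpow_one_sub_lt {δ c α₁ : ℝ} (hδ : 0 < δ) (hc : 0 < c) (hα₁ : 1 < α₁) :
    ∀ᶠ n : ℕ in atTop, 1 ≤ n * δ ∧ ∀ α, α₁ ≤ α → (n : ℝ) ^ (1 - α) < δ ^ α * ((α - 1) * c) := by
  have hnδ : Tendsto (fun n : ℕ => (n : ℝ) * δ) atTop atTop :=
    tendsto_natCast_atTop_atTop.atTop_mul_const hδ
  have hsmall := ((tendsto_rpow_neg_atTop (sub_pos.2 hα₁)).comp hnδ).eventually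
    (eventually_lt_nhds (mul_pos hδ (mul_pos (sub_pos.2 hα₁) hc)))
  filter_upwards [hnδ.eventually_ge_atTop 1, hsmall] with n hn1 hn
  refine ⟨hn1, fun α hα => ?_⟩
  have hn0 : (0 : ℝ) < n := pos_of_mul_pos_left (one_pos.trans_le hn1) hδ.le
  calc (n : ℝ) ^ (1 - α) = (n * δ) ^ (1 - α) * δ ^ (α - 1) := by
        rw [mul_rpow hn0.le hδ.le, mul_assoc, ← rpow_add hδ]
        simp
    _ ≤ (n * δ) ^ (-(α₁ - 1)) * δ ^ (α - 1) := by
        gcongr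
        linarith
    _ < δ * ((α₁ - 1) * c) * δ ^ (α - 1) := by gcongr; exact hn
    _ ≤ δ * ((α - 1) * c) * δ ^ (α - 1) := by gcongr
    _ = δ ^ α * ((α - 1) * c) := by rw [rpow_sub_one hδ.ne']; field_simp

section Comparison

variable {m : ℕ} {p q : Fin m → ℝ} {δ : ℝ} {n : ℕ}

lemma sub_sum_shift_mul (hq : ∑ i, q i = 1) (δ x : ℝ) :
    x - (∑ j, (q j - δ)) * x = δ * (m * x) := by
  simp only [Finset.sum_sub_distrib, hq, Finset.sum_const, Finset.card_univ, Fintype.card_fin,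
    nsmul_eq_mul]
  ring

lemma renyi_kron_qBext_lt_renyi_qAB (hp : IsProbDist p) (hq : IsProbDist q) (hδ : 0 < δ)
    (hδq : ∀ i, δ < q i) (hn : 0 < n) (hy : shannonEntropy (fun i => (m : ℝ) * p i) < 0)
    {α₁ : ℝ} (hnear : ∀ α ∈ Set.Ioo 1 α₁,
      ∑ i, (q i - δ) ^ α < ∑ i, ((∑ j, (q j - δ)) * p i) ^ α)
    (hfar : ∀ α, α₁ ≤ α →
      (n : ℝ) ^ (1 - α) < δ ^ α * ((α - 1) * -shannonEntropy (fun i => (m : ℝ) * p i)))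
    {α : ℝ} (hα : 1 < α) :
    renyi α (kron p (qBext (fun i => q i - δ) n)) < renyi α (qAB q (fun i => q i - δ) n) := by
  have hm : (0 : ℝ) < m := by
    have : m ≠ 0 := by rintro rfl; simpa using hp.2
    positivity
  have hu : ∀ i, 0 ≤ q i - δ := fun i => sub_nonneg.2 (hδq i).le
  have ht : 0 ≤ ∑ j, (q j - δ) := Finset.sum_nonneg fun j _ => hu j
  have hy0 : ∀ i, 0 ≤ (m : ℝ) * p i := fun i => mul_nonneg hm.le (hp.1 i)
  have htangent := sum_sub_mul_shannonEntropy_le_sum_rpow hy0 α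
  rw [← Finset.mul_sum, hp.2, mul_one] at htangent
  have hA : ∑ i, (q i - δ) ^ α ≤ 1 :=
    calc ∑ i, (q i - δ) ^ α ≤ ∑ i, q i := Finset.sum_le_sum fun i _ =>
          (rpow_le_self_of_le_one (hu i) (by linarith [hq.le_one i]) hα.le).trans (by linarith)
      _ = 1 := hq.2
  have hL : ∑ x, qAB q (fun i => q i - δ) n x ^ α
      = m * δ ^ α + (n : ℝ) ^ (1 - α) * ∑ i, (q i - δ) ^ α := by
    simp [sum_rpow_qAB hu hn]
  have hR : ∑ x, qAB p (fun i => (∑ j, (q j - δ)) * p i) n x ^ α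
      = δ ^ α * ∑ i, ((m : ℝ) * p i) ^ α
        + (n : ℝ) ^ (1 - α) * ∑ i, ((∑ j, (q j - δ)) * p i) ^ α := by
    simp only [sum_rpow_qAB (fun i => mul_nonneg ht (hp.1 i)) hn, sub_sum_shift_mul hq.2,
      mul_rpow hδ.le (hy0 _), Finset.mul_sum]
  have hw : 0 < (n : ℝ) ^ (1 - α) := by positivity
  have hδα : 0 < δ ^ α := by positivity
  have hA0 : 0 ≤ ∑ i, (q i - δ) ^ α := Finset.sum_nonneg fun i _ => rpow_nonneg (hu i) α
  have hB0 : 0 ≤ ∑ i, ((∑ j, (q j - δ)) * p i) ^ α :=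
    Finset.sum_nonneg fun i _ => rpow_nonneg (mul_nonneg ht (hp.1 i)) α
  rw [kron_qBext]
  refine renyi_lt_renyi_of_sum_rpow_lt hα (by rw [hL]; positivity) ?_
  rw [hL, hR]
  rcases lt_or_ge α α₁ with hα₁ | hα₁
  · nlinarith [mul_lt_mul_of_pos_left (hnear α ⟨hα, hα₁⟩) hw,
      mul_le_mul_of_nonneg_left htangent hδα.le,
      mul_pos hδα (mul_pos (sub_pos.2 hα) (neg_pos.2 hy))]
  · linarith [mul_le_mul_of_nonneg_left hA hw.le, mul_nonneg hw.le hB0,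
      mul_le_mul_of_nonneg_left htangent hδα.le, hfar α hα₁]

lemma shannonEntropy_kron_qBext_lt_shannonEntropy_qAB (hp : ∑ i, p i = 1)
    (hq : ∑ i, q i = 1) (hδ : 0 < δ) (hn : 0 < n)
    (hy : shannonEntropy (fun i => (m : ℝ) * p i) < 0)
    (hH : shannonEntropy (fun i => (∑ j, (q j - δ)) * p i) < shannonEntropy (fun i => q i - δ)) :
    shannonEntropy (kron p (qBext (fun i => q i - δ) n)) <
      shannonEntropy (qAB q (fun i => q i - δ) n) := by
  have hconst : shannonEntropy (fun _ : Fin m => δ) = m * negMulLog δ := by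
    simp [shannonEntropy_eq_sum_negMulLog]
  have hscaled : shannonEntropy (fun i => δ * (m * p i))
      = δ * shannonEntropy (fun i => (m : ℝ) * p i) + negMulLog δ * m := by
    rw [shannonEntropy_const_mul, ← Finset.mul_sum, hp, mul_one]
  rw [kron_qBext, shannonEntropy_qAB _ _ hn, shannonEntropy_qAB _ _ hn]
  simp only [sub_sub_cancel, sub_sum_shift_mul hq, hconst, hscaled, ← Finset.mul_sum, hp, mul_one]
  nlinarith [mul_neg_of_pos_of_neg hδ hy]

lemma renyiInf_kron_qBext_lt_renyiInf_qAB (hp : ∀ i, 0 ≤ p i) (hq : IsProbDist q) (hδ : 0 < δ)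
    (hnδ : 1 ≤ n * δ)
    (hy : shannonEntropy (fun i => (m : ℝ) * p i) < 0) :
    renyiInf (kron p (qBext (fun i => q i - δ) n)) < renyiInf (qAB q (fun i => q i - δ) n) := by
  obtain ⟨i, hi⟩ := exists_one_lt_of_shannonEntropy_neg (fun i => mul_nonneg m.cast_nonneg (hp i)) hy
  have : Nonempty (Fin m) := ⟨i⟩
  have hn : (0 : ℝ) < n := pos_of_mul_pos_left (one_pos.trans_le hnδ) hδ.le
  have hQ : ⨆ x, qAB q (fun i => q i - δ) n x ≤ δ := ciSup_le fun ⟨i, j⟩ => by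
    simp only [qAB]
    split_ifs
    · simp
    · rw [div_le_iff₀ hn]
      linarith [hq.le_one i]
  have hQ' : δ ≤ ⨆ x, qAB q (fun i => q i - δ) n x :=
    calc δ = qAB q (fun i => q i - δ) n (i, 0) := by simp [qAB]
      _ ≤ _ := Finite.le_ciSup _ _
  have hK : δ * (m * p i) ≤ ⨆ x, kron p (qBext (fun i => q i - δ) n) x :=
    calc δ * (m * p i) = kron p (qBext (fun i => q i - δ) n) (i, 0) := by
          simp only [kron_qBext, qAB, if_pos, sub_sum_shift_mul hq.2]
      _ ≤ _ := Finite.le_ciSup _ _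
  refine neg_lt_neg (log_lt_log (hδ.trans_le hQ') (hQ.trans_lt (lt_of_lt_of_le ?_ hK)))
  nlinarith

end Comparison

theorem lemma_part1_general {m : ℕ} (p q : Fin m → ℝ)
    (hp : IsProbDist p) (hq : IsProbDist q)
    (hq_rank : ∀ i, q i ≠ 0) (hH : shannonEntropy p < shannonEntropy q) :
    ∃ δ : ℝ, 0 < δ ∧ δ < (⨅ i, q i) ∧ ∃ N : ℕ, ∀ n ≥ N,
      (∀ α : ℝ, 1 ≤ α →
        renyi α (kron p (qBext (fun i => q i - δ) n)) <
          renyi α (qAB q (fun i => q i - δ) n)) ∧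
      renyiInf (kron p (qBext (fun i => q i - δ) n)) <
        renyiInf (qAB q (fun i => q i - δ) n) := by
  obtain ⟨i, -⟩ := Finset.exists_ne_zero_of_sum_ne_zero (hq.2 ▸ one_ne_zero)
  have : Nonempty (Fin m) := ⟨i⟩
  have hy := shannonEntropy_card_mul_neg hp.2 hq hH
  rw [Fintype.card_fin] at hy
  obtain ⟨δ, hδ, hδq, hHδ⟩ :=
    exists_shannonEntropy_lt_shift (fun i => (hq.1 i).lt_of_ne' (hq_rank i)) hq.2 hH
  have hδ_lt (i) : δ < q i := hδq.trans_le (ciInf_le (Finite.bddBelow_range q) i)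
  have ht : 0 ≤ ∑ j, (q j - δ) := Finset.sum_nonneg fun j _ => sub_nonneg.2 (hδ_lt j).le
  obtain ⟨α₁, hα₁, hnear⟩ := mem_nhdsGT_iff_exists_Ioo_subset.1 <|
    eventually_sum_rpow_lt (fun i => sub_nonneg.2 (hδ_lt i).le) (fun i => mul_nonneg ht (hp.1 i))
      (by rw [← Finset.mul_sum, hp.2, mul_one]) hHδ
  obtain ⟨N, hN⟩ := eventually_atTop.1 <|
    eventually_forall_rpow_one_sub_lt hδ (neg_pos.2 hy) (Set.mem_Ioi.1 hα₁)
  refine ⟨δ, hδ, hδq, N, fun n hn => ⟨fun α hα => ?_, ?_⟩⟩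
  · obtain ⟨hnδ, hfar⟩ := hN n hn
    have hn0 : 0 < n := by exact_mod_cast pos_of_mul_pos_left (one_pos.trans_le hnδ) hδ.le
    rcases hα.eq_or_lt with rfl | hα
    · simpa [renyi] using shannonEntropy_kron_qBext_lt_shannonEntropy_qAB hp.2 hq.2 hδ hn0 hy hHδ
    · exact renyi_kron_qBext_lt_renyi_qAB hp hq hδ hδ_lt hn0 hy hnear hfar hα
  · exact renyiInf_kron_qBext_lt_renyiInf_qAB hp.1 hq hδ (hN n hn).1 hy

/-- **Lemma 1.** If `q` has full rank, `H(p) < H(q)` and `q` is not uniform,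
then there are `δ ∈ (0, min_i q_i)` and `N` such that, with `a_i := q_i - δ`, for all
`n ≥ N`: `H_α(p ⊗ q_B) < H_α(q_{AB})` for all real `α ≥ 1`, and also for `α = ∞`. -/
theorem lemma_part1 {m : ℕ} (p q : Fin m → ℝ)
    (hp : IsProbDist p) (hq : IsProbDist q)
    (hq_rank : ∀ i, q i ≠ 0) (hH : shannonEntropy p < shannonEntropy q)
    (hq_ne : q ≠ fun _ => 1 / (m : ℝ)) :
    ∃ δ : ℝ, 0 < δ ∧ δ < (⨅ i, q i) ∧ ∃ N : ℕ, ∀ n ≥ N,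
      (∀ α : ℝ, 1 ≤ α →
        renyi α (kron p (qBext (fun i => q i - δ) n)) <
          renyi α (qAB q (fun i => q i - δ) n)) ∧
      renyiInf (kron p (qBext (fun i => q i - δ) n)) <
        renyiInf (qAB q (fun i => q i - δ) n) :=
  lemma_part1_general p q hp hq hq_rank hH
end

section
/- Let p ∈ ℝ^m be a probability distribution with full rank (all entries strictly positive). Then H_Burg(p) + log m = lim_{α→0⁺} ((1−α)/α)·(H_α(p) − log m) and H_Burg(p) + log m = lim_{α→0⁻} ((1−α)/α)·(−H_α(p) − log m). -/
open scoped BigOperators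

/-!
With `L(α) = log ∑ᵢ pᵢ^α` we have `L(0) = log m` and `L'(0) = (1/m) ∑ᵢ log pᵢ = H_Burg(p)`.
On either side of `0`, `sgn α · H_α(p) = L(α)/(1 - α)`, so the rescaled Rényi entropy is
`(L(α) - log m)/α + log m`, a difference quotient of `L` at `0` shifted by `log m`.
-/

open Filter Topology

section
variable {ι : Type*} [Fintype ι] {p : ι → ℝ}

theorem hasDerivAt_log_sum_rpow_zero [Nonempty ι] (hp : ∀ i, 0 < p i) :
    HasDerivAt (fun α : ℝ => Real.log (∑ i, p i ^ α)) (burg p) 0 := by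
  have hsum : HasDerivAt (fun α : ℝ => ∑ i, p i ^ α) (∑ i, Real.log (p i)) 0 := by
    simpa using HasDerivAt.fun_sum (u := Finset.univ)
      fun i _ => (Real.hasStrictDerivAt_const_rpow (hp i) 0).hasDerivAt
  have hcard : ∑ i, p i ^ (0 : ℝ) = Fintype.card ι := by simp
  have := hsum.log (by rw [hcard]; positivity)
  rwa [hcard, ← one_div_mul_eq_div] at this

theorem tendsto_log_sum_rpow_slope_zero [Nonempty ι] (hp : ∀ i, 0 < p i) :
    Tendsto (fun α : ℝ => (Real.log (∑ i, p i ^ α) - Real.log (Fintype.card ι)) / α)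
      (𝓝[≠] 0) (𝓝 (burg p)) := by
  refine (hasDerivAt_iff_tendsto_slope.mp (hasDerivAt_log_sum_rpow_zero hp)).congr fun α => ?_
  simp [slope_def_field]

theorem one_sub_div_mul_sign_mul_renyi_sub_log {α : ℝ} (h0 : α ≠ 0) (h1 : α ≠ 1) :
    (1 - α) / α * (Real.sign α * renyi α p - Real.log (Fintype.card ι)) =
      (Real.log (∑ i, p i ^ α) - Real.log (Fintype.card ι)) / α + Real.log (Fintype.card ι) := by
  have hsign : Real.sign α * Real.sign α = 1 := by
    rcases h0.lt_or_gt with h | h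
    · simp [Real.sign_of_neg h]
    · simp [Real.sign_of_pos h]
  have h1' : 1 - α ≠ 0 := sub_ne_zero.mpr (Ne.symm h1)
  rw [renyi, if_neg h1, ← mul_assoc, mul_div_assoc', hsign]
  field_simp
  ring

theorem tendsto_one_sub_div_mul_sign_mul_renyi_sub_log [Nonempty ι] (hp : ∀ i, 0 < p i) :
    Tendsto (fun α : ℝ => (1 - α) / α * (Real.sign α * renyi α p - Real.log (Fintype.card ι)))
      (𝓝[≠] 0) (𝓝 (burg p + Real.log (Fintype.card ι))) := by
  refine ((tendsto_log_sum_rpow_slope_zero hp).add_const _).congr' ?_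
  filter_upwards [self_mem_nhdsWithin, nhdsWithin_le_nhds (eventually_ne_nhds zero_ne_one)]
    with α h0 h1
  exact (one_sub_div_mul_sign_mul_renyi_sub_log h0 h1).symm

end

/-- For a full-rank probability distribution `p ∈ ℝ^m`:
`H_Burg(p) + log m = lim_{α→0⁺} ((1-α)/α)(H_α(p) - log m)
               = lim_{α→0⁻} ((1-α)/α)(-H_α(p) - log m)`. -/
theorem burg_limit {m : ℕ} (p : Fin m → ℝ) (hp : IsProbDist p)
    (hfull : ∀ i, p i ≠ 0) :
    Filter.Tendsto (fun α : ℝ => ((1 - α) / α) * (renyi α p - Real.log m))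
      (nhdsWithin 0 (Set.Ioi 0)) (nhds (burg p + Real.log m)) ∧
    Filter.Tendsto (fun α : ℝ => ((1 - α) / α) * (-renyi α p - Real.log m))
      (nhdsWithin 0 (Set.Iio 0)) (nhds (burg p + Real.log m)) := by
  have hpos : ∀ i, 0 < p i := fun i => (hp.1 i).lt_of_ne' (hfull i)
  have : Nonempty (Fin m) := by
    by_contra h
    simpa [not_nonempty_iff.mp h] using hp.2
  have hlim := tendsto_one_sub_div_mul_sign_mul_renyi_sub_log hpos
  rw [Fintype.card_fin] at hlim
  constructor
  · refine (hlim.mono_left (nhdsWithin_mono _ fun α h => ne_of_gt h)).congr' ?_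
    filter_upwards [self_mem_nhdsWithin] with α (h : 0 < α)
    rw [Real.sign_of_pos h, one_mul]
  · refine (hlim.mono_left (nhdsWithin_mono _ fun α h => ne_of_lt h)).congr' ?_
    filter_upwards [self_mem_nhdsWithin] with α (h : α < 0)
    rw [Real.sign_of_neg h, neg_one_mul]
end

section
/- Let p, q ∈ ℝ^m be probability distributions with q of full rank and q ≠ (1/m,…,1/m), let δ ∈ (0, min_i q_i), and fix a real α ∈ (1,∞). For real n ≥ 1 define Δ_n^{(α)} := (1/(1−α)) · log [ (m δ^α + n^{1−α} ∑_{i=1}^m (q_i − δ)^α) / ( (∑_{i=1}^m p_i^α) · (m^α δ^α + (1 − mδ)^α n^{1−α}) ) ]. Then n ↦ Δ_n^{(α)} is strictly increasing on [1,∞). -/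
open scoped BigOperators

/-!
Put `t = n ^ (1 - α)`, which decreases strictly in `n ≥ 1`. Then `Δ` is `1 / (1 - α) < 0` times
the logarithm of a Möbius function `t ↦ (A + t B) / (C (D + E t))` with positive coefficients,
and such a function increases strictly in `t` as soon as `A E < B D`. Here that inequality reads
`(∑ i, (q i - δ)) ^ α < m ^ (α - 1) ∑ i, (q i - δ) ^ α`, the strict power-mean inequality, which
holds because `q`, hence `q - δ`, is not constant.
-/

open Finset

lemma rpow_sum_lt_card_rpow_mul_sum_rpow {ι : Type*} {s : Finset ι} {x : ι → ℝ}
    (hx : ∀ i ∈ s, 0 ≤ x i) (hne : ∃ j ∈ s, ∃ k ∈ s, x j ≠ x k) {p : ℝ} (hp : 1 < p) :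
    (∑ i ∈ s, x i) ^ p < (#s : ℝ) ^ (p - 1) * ∑ i ∈ s, x i ^ p := by
  have hs : s.Nonempty := let ⟨j, hj, _⟩ := hne; ⟨j, hj⟩
  have hcard : (0 : ℝ) < #s := by exact_mod_cast card_pos.2 hs
  have hjensen := (strictConvexOn_rpow hp).map_sum_lt (w := fun _ => (#s : ℝ)⁻¹)
    (fun _ _ => inv_pos.2 hcard) (by simp [hcard.ne']) (fun i hi => hx i hi) hne
  simp only [smul_eq_mul, ← mul_sum] at hjensen
  rw [Real.mul_rpow (inv_nonneg.2 hcard.le) (sum_nonneg hx), Real.inv_rpow hcard.le,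
    inv_mul_lt_iff₀ (Real.rpow_pos_of_pos hcard p)] at hjensen
  rwa [Real.rpow_sub_one hcard.ne', div_mul_eq_mul_div, mul_div_assoc, ← inv_mul_eq_div]

lemma add_mul_div_add_mul_lt_of_lt {a b d e s t : ℝ} (hde : a * e < b * d) (hts : t < s)
    (ht : 0 < d + e * t) (hs : 0 < d + e * s) :
    (a + t * b) / (d + e * t) < (a + s * b) / (d + e * s) := by
  rw [div_lt_div_iff₀ ht hs]
  nlinarith [mul_lt_mul_of_pos_left hde (sub_pos.2 hts)]

lemma exists_ne_of_ne_uniform {ι : Type*} [Fintype ι] {q : ι → ℝ} (hsum : ∑ i, q i = 1)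
    (hne : q ≠ fun _ => 1 / (Fintype.card ι : ℝ)) : ∃ j k, q j ≠ q k := by
  by_contra! hconst
  refine hne (funext fun j => eq_one_div_of_mul_eq_one_right ?_)
  rw [← hsum, sum_congr rfl fun k _ => hconst k j, sum_const, card_univ, nsmul_eq_mul]

lemma IsProbDist.sum_rpow_pos {ι : Type*} [Fintype ι] {p : ι → ℝ} (hp : IsProbDist p) (α : ℝ) :
    0 < ∑ i, p i ^ α := by
  obtain ⟨i, hi⟩ : ∃ i, 0 < p i := by
    by_contra! h
    linarith [sum_nonpos (s := univ) fun i _ => h i, hp.2]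
  exact sum_pos' (fun i _ => Real.rpow_nonneg (hp.1 i) α) ⟨i, mem_univ i, Real.rpow_pos_of_pos hi α⟩

theorem delta_strict_mono_general {m : ℕ} (p q : Fin m → ℝ)
    (hp : IsProbDist p) (hq : IsProbDist q)
    (hq_ne : q ≠ fun _ => 1 / (m : ℝ))
    (δ : ℝ) (hδ0 : 0 < δ) (hδ : δ < ⨅ i, q i) (α : ℝ) (hα : 1 < α) :
    StrictMonoOn (fun n : ℝ => (1 / (1 - α)) * Real.log
      (((m : ℝ) * δ ^ α + n ^ (1 - α) * ∑ i, (q i - δ) ^ α) /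
        ((∑ i, p i ^ α) *
          ((m : ℝ) ^ α * δ ^ α + (1 - (m : ℝ) * δ) ^ α * n ^ (1 - α)))))
      (Set.Ici 1) := by
  obtain ⟨j, k, hjk⟩ := exists_ne_of_ne_uniform hq.2 (by rwa [Fintype.card_fin])
  have hm : (0 : ℝ) < m := by exact_mod_cast j.pos
  have hδq : ∀ i, 0 < q i - δ := fun i =>
    sub_pos.2 (hδ.trans_le (ciInf_le (Set.finite_range q).bddBelow i))
  have hB : 0 < ∑ i, (q i - δ) ^ α :=
    sum_pos (fun i _ => Real.rpow_pos_of_pos (hδq i) α) ⟨j, mem_univ j⟩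
  have hsum : ∑ i, (q i - δ) = 1 - m * δ := by simp [sum_sub_distrib, hq.2]
  have hmδ : 0 < 1 - (m : ℝ) * δ := hsum ▸ sum_pos (fun i _ => hδq i) ⟨j, mem_univ j⟩
  have hpower : (1 - m * δ) ^ α < (m : ℝ) ^ α / m * ∑ i, (q i - δ) ^ α := by
    simpa [hsum, Real.rpow_sub_one hm.ne'] using rpow_sum_lt_card_rpow_mul_sum_rpow (s := univ)
      (fun i _ => (hδq i).le) ⟨j, mem_univ j, k, mem_univ k, by simpa using hjk⟩ hα
  have hkey : m * δ ^ α * (1 - m * δ) ^ α < (∑ i, (q i - δ) ^ α) * ((m : ℝ) ^ α * δ ^ α) :=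
    calc _ < m * δ ^ α * ((m : ℝ) ^ α / m * ∑ i, (q i - δ) ^ α) :=
          mul_lt_mul_of_pos_left hpower (by positivity)
      _ = _ := by field_simp
  intro x hx y hy hxy
  have hx0 : 0 < x := one_pos.trans_le hx
  have hy0 : 0 < y := one_pos.trans_le hy
  have hts : y ^ (1 - α) < x ^ (1 - α) := Real.rpow_lt_rpow_of_neg hx0 hxy (by linarith)
  have hratio := add_mul_div_add_mul_lt_of_lt hkey hts (by positivity) (by positivity)
  have hC := hp.sum_rpow_pos α
  simp only [div_mul_eq_div_div_swap]
  refine mul_lt_mul_of_neg_left (Real.log_lt_log ?_ (div_lt_div_of_pos_right hratio hC)) ?_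
  · exact div_pos (div_pos (add_pos (by positivity) (mul_pos (by positivity) hB))
      (by positivity)) hC
  · exact one_div_neg.2 (by linarith)

/-- With `q` full rank and non-uniform, `δ ∈ (0, min_i q_i)` and fixed
`α > 1`, the quantity `Δ_n^{(α)}` is strictly increasing in real `n ∈ [1, ∞)`. -/
theorem delta_strict_mono {m : ℕ} (p q : Fin m → ℝ)
    (hp : IsProbDist p) (hq : IsProbDist q)
    (hq_rank : ∀ i, q i ≠ 0) (hq_ne : q ≠ fun _ => 1 / (m : ℝ))
    (δ : ℝ) (hδ0 : 0 < δ) (hδ : δ < ⨅ i, q i) (α : ℝ) (hα : 1 < α) :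
    StrictMonoOn (fun n : ℝ => (1 / (1 - α)) * Real.log
      (((m : ℝ) * δ ^ α + n ^ (1 - α) * ∑ i, (q i - δ) ^ α) /
        ((∑ i, p i ^ α) *
          ((m : ℝ) ^ α * δ ^ α + (1 - (m : ℝ) * δ) ^ α * n ^ (1 - α)))))
      (Set.Ici 1) :=
  delta_strict_mono_general p q hp hq hq_ne δ hδ0 hδ α hα
end

section
/- Let p, q ∈ ℝ^m be probability distributions of full rank, let a ∈ (0, m·min_i q_i), set a_i := a/m, and let q_{AB} be the corresponding bipartite extension of q with parameter n ∈ ℕ; define Δ̃_n^{(α)} := H_α(q_{AB}) − H_α(q_B) − H_α(p). Then: for every finite real α < 0, lim_{n→∞} Δ̃_n^{(α)} = −log m − H_α(p); for every α ∈ (0,1), lim_{n→∞} Δ̃_n^{(α)} = log m − H_α(p); and for every finite real α > 1, lim_{n→∞} Δ̃_n^{(α)} = H_α(((q_i − a/m)/(1−a))_i) − H_α(p). -/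
open scoped BigOperators

/-- The quantity `Δ̃_n^{(α)} = H_α(q_{AB}) - H_α(q_B) - H_α(p)` for `a_i := a/m`. -/
noncomputable def deltaTilde {m : ℕ} (p q : Fin m → ℝ) (a α : ℝ) (n : ℕ) : ℝ :=
  renyi α (qAB q (fun _ => a / (m : ℝ)) n) -
    renyi α (qBext (fun _ : Fin m => a / (m : ℝ)) n) - renyi α p

/-! For `α ≠ 1` both power sums have the shape `A + M n^{1-α}`. When `α < 1` the terms
`n^{1-α}` dominate, and the ratio of their coefficients `m (a/m)^α / a^α = m^{1-α}` gives
`sign α · log m`; when `α > 1` they vanish and what survives is the power sum of the first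
column `(q_i - a/m)_i`, normalized by `(1 - a)^α`. -/

open Filter Topology

theorem Real.tendsto_log_add_mul_sub_log {ι : Type*} {l : Filter ι} {g : ι → ℝ}
    (hg : Tendsto g l atTop) (A : ℝ) {M : ℝ} (hM : 0 < M) :
    Tendsto (fun x => Real.log (A + M * g x) - Real.log (g x)) l (𝓝 (Real.log M)) := by
  have hlin : Tendsto (fun x => A + M * g x) l atTop :=
    tendsto_atTop_add_const_left _ A (hg.const_mul_atTop hM)
  have hquot : Tendsto (fun x => A / g x + M) l (𝓝 M) := by
    simpa [div_eq_mul_inv] using (hg.inv_tendsto_atTop.const_mul A).add_const M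
  refine (hquot.log hM.ne').congr' ?_
  filter_upwards [hg.eventually_gt_atTop 0, hlin.eventually_gt_atTop 0] with x hgx hlinx
  rw [← Real.log_div hlinx.ne' hgx.ne', add_div, mul_div_cancel_right₀ _ hgx.ne']

theorem Real.tendsto_log_add_mul_sub_log_add_mul {ι : Type*} {l : Filter ι} {g : ι → ℝ}
    (hg : Tendsto g l atTop) (A B : ℝ) {M C : ℝ} (hM : 0 < M) (hC : 0 < C) :
    Tendsto (fun x => Real.log (A + M * g x) - Real.log (B + C * g x)) l
      (𝓝 (Real.log M - Real.log C)) :=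
  ((Real.tendsto_log_add_mul_sub_log hg A hM).sub
    (Real.tendsto_log_add_mul_sub_log hg B hC)).congr fun _ => by ring

theorem sum_fin_succ_ite_div_rpow (x : ℝ) {y : ℝ} (hy : 0 ≤ y) {n : ℕ} (hn : n ≠ 0)
    (α : ℝ) :
    ∑ j : Fin (n + 1), (if j = 0 then x else y / n) ^ α = x ^ α + y ^ α * (n : ℝ) ^ (1 - α) := by
  have hn' : (0 : ℝ) < n := by positivity
  simp only [Fin.sum_univ_succ, if_pos, Fin.succ_ne_zero, if_false, Finset.sum_const,
    Finset.card_univ, Fintype.card_fin, nsmul_eq_mul]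
  rw [Real.div_rpow hy hn'.le, Real.rpow_sub hn', Real.rpow_one]
  field_simp

theorem sum_qAB_rpow {m : ℕ} (q a : Fin m → ℝ) (ha : ∀ i, 0 ≤ a i) {n : ℕ} (hn : n ≠ 0)
    (α : ℝ) :
    ∑ x, qAB q a n x ^ α = ∑ i, (q i - a i) ^ α + (∑ i, a i ^ α) * (n : ℝ) ^ (1 - α) := by
  simp only [Fintype.sum_prod_type, qAB, sum_fin_succ_ite_div_rpow _ (ha _) hn,
    Finset.sum_add_distrib, Finset.sum_mul]

theorem sum_qBext_rpow {m : ℕ} (a : Fin m → ℝ) (ha : 0 ≤ ∑ i, a i) {n : ℕ} (hn : n ≠ 0)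
    (α : ℝ) :
    ∑ j, qBext a n j ^ α =
      (1 - ∑ i, a i) ^ α + (∑ i, a i) ^ α * (n : ℝ) ^ (1 - α) :=
  sum_fin_succ_ite_div_rpow _ ha hn α

section deltaTilde

variable {m : ℕ} (p q : Fin m → ℝ) {a α : ℝ}

theorem deltaTilde_eq (hm : m ≠ 0) (ha : 0 ≤ a) (hα : α ≠ 1) {n : ℕ} (hn : n ≠ 0) :
    deltaTilde p q a α n =
      Real.sign α / (1 - α) *
        (Real.log (∑ i, (q i - a / m) ^ α + m * (a / m) ^ α * (n : ℝ) ^ (1 - α)) -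
          Real.log ((1 - a) ^ α + a ^ α * (n : ℝ) ^ (1 - α))) - renyi α p := by
  have hsum : ∑ _i : Fin m, a / m = a := by simp [field]
  rw [deltaTilde, renyi, if_neg hα, renyi, if_neg hα,
    sum_qAB_rpow _ _ (fun _ => by positivity) hn, sum_qBext_rpow _ (hsum.symm ▸ ha) hn, hsum]
  simp only [Finset.sum_const, Finset.card_univ, Fintype.card_fin, nsmul_eq_mul]
  ring

theorem tendsto_deltaTilde_of_lt_one (hm : m ≠ 0) (ha : 0 < a) (hα : α < 1) :
    Tendsto (deltaTilde p q a α) atTop (𝓝 (Real.sign α * Real.log m - renyi α p)) := by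
  have hm' : (0 : ℝ) < m := by positivity
  have hpow : Tendsto (fun n : ℕ => (n : ℝ) ^ (1 - α)) atTop atTop :=
    (tendsto_rpow_atTop (by linarith)).comp tendsto_natCast_atTop_atTop
  have hlim := ((Real.tendsto_log_add_mul_sub_log_add_mul hpow (∑ i, (q i - a / m) ^ α)
    ((1 - a) ^ α) (by positivity : 0 < (m : ℝ) * (a / m) ^ α)
    (by positivity : 0 < a ^ α)).const_mul (Real.sign α / (1 - α))).sub_const (renyi α p)
  have hratio : Real.log (m * (a / m) ^ α) - Real.log (a ^ α) = (1 - α) * Real.log m := by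
    rw [Real.log_mul hm'.ne' (by positivity), Real.log_rpow (by positivity),
      Real.log_rpow ha, Real.log_div ha.ne' hm'.ne']
    ring
  rw [hratio, show Real.sign α / (1 - α) * ((1 - α) * Real.log m) = Real.sign α * Real.log m by
    field_simp [show 1 - α ≠ 0 by linarith]] at hlim
  refine hlim.congr' ?_
  filter_upwards [eventually_ne_atTop 0] with n hn
  rw [deltaTilde_eq p q hm ha.le hα.ne hn]

theorem tendsto_deltaTilde_of_one_lt (hm : m ≠ 0) (ha : 0 < a) (hqa : ∀ i, a / m < q i)
    (ha1 : a < 1) (hα : 1 < α) :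
    Tendsto (deltaTilde p q a α) atTop
      (𝓝 (renyi α (fun i => (q i - a / m) / (1 - a)) - renyi α p)) := by
  have : Nonempty (Fin m) := Fin.pos_iff_nonempty.mp (Nat.pos_of_ne_zero hm)
  have hcol : ∀ i, 0 < q i - a / m := fun i => sub_pos.mpr (hqa i)
  have hA : 0 < ∑ i, (q i - a / m) ^ α :=
    Finset.sum_pos (fun i _ => Real.rpow_pos_of_pos (hcol i) α) Finset.univ_nonempty
  have hB : 0 < (1 - a) ^ α := Real.rpow_pos_of_pos (by linarith) α
  have hpow : Tendsto (fun n : ℕ => (n : ℝ) ^ (1 - α)) atTop (𝓝 0) := by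
    rw [show 1 - α = -(α - 1) by ring]
    exact (tendsto_rpow_neg_atTop (by linarith)).comp tendsto_natCast_atTop_atTop
  have hlin : ∀ A M : ℝ, Tendsto (fun n : ℕ => A + M * (n : ℝ) ^ (1 - α)) atTop (𝓝 A) :=
    fun A M => by simpa using (hpow.const_mul M).const_add A
  have hlim := ((((hlin _ ((m : ℝ) * (a / m) ^ α)).log hA.ne').sub
    ((hlin _ (a ^ α)).log hB.ne')).const_mul (Real.sign α / (1 - α))).sub_const (renyi α p)
  have hnormalize : renyi α (fun i => (q i - a / m) / (1 - a)) =
      Real.sign α / (1 - α) *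
        (Real.log (∑ i, (q i - a / m) ^ α) - Real.log ((1 - a) ^ α)) := by
    rw [renyi, if_neg hα.ne', ← Real.log_div hA.ne' hB.ne', Finset.sum_div]
    simp only [Real.div_rpow (hcol _).le (by linarith : (0 : ℝ) ≤ 1 - a)]
  rw [hnormalize]
  refine hlim.congr' ?_
  filter_upwards [eventually_ne_atTop 0] with n hn
  rw [deltaTilde_eq p q hm ha.le hα.ne' hn]

end deltaTilde

theorem deltaTilde_limits_general {m : ℕ} (p q : Fin m → ℝ)
    (hq : IsProbDist q)
    (a : ℝ) (ha : 0 < a) (ha' : a < (m : ℝ) * ⨅ i, q i) :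
    (∀ α : ℝ, α < 0 →
      Filter.Tendsto (deltaTilde p q a α) Filter.atTop
        (nhds (-Real.log m - renyi α p))) ∧
    (∀ α : ℝ, 0 < α → α < 1 →
      Filter.Tendsto (deltaTilde p q a α) Filter.atTop
        (nhds (Real.log m - renyi α p))) ∧
    (∀ α : ℝ, 1 < α →
      Filter.Tendsto (deltaTilde p q a α) Filter.atTop
        (nhds (renyi α (fun i => (q i - a / (m : ℝ)) / (1 - a)) - renyi α p))) := by
  have hm : m ≠ 0 := by
    rintro rfl
    rw [Nat.cast_zero, zero_mul] at ha'
    exact ha.not_gt ha'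
  have hm' : (0 : ℝ) < m := by positivity
  have hqa : ∀ i, a / m < q i := fun i => by
    rw [div_lt_iff₀' hm']
    exact ha'.trans_le (mul_le_mul_of_nonneg_left (ciInf_le (Finite.bddBelow_range q) i) hm'.le)
  have ha1 : a < 1 := by
    have : Nonempty (Fin m) := Fin.pos_iff_nonempty.mp (Nat.pos_of_ne_zero hm)
    calc a = ∑ _i : Fin m, a / m := by simp [field]
      _ < ∑ i, q i := Finset.sum_lt_sum_of_nonempty Finset.univ_nonempty fun i _ => hqa i
      _ = 1 := hq.2
  refine ⟨fun α hα => ?_, fun α hα0 hα1 => ?_,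
    fun α hα => tendsto_deltaTilde_of_one_lt p q hm ha hqa ha1 hα⟩
  · have := tendsto_deltaTilde_of_lt_one p q hm ha (hα.trans zero_lt_one)
    rwa [Real.sign_of_neg hα, neg_one_mul] at this
  · have := tendsto_deltaTilde_of_lt_one p q hm ha hα1
    rwa [Real.sign_of_pos hα0, one_mul] at this

/-- With `p, q` full rank and `a ∈ (0, m·min_i q_i)`, `a_i := a/m`:
`lim_{n→∞} Δ̃_n^{(α)}` equals `-log m - H_α(p)` for `α < 0`, `log m - H_α(p)` for
`0 < α < 1`, and `H_α(((q_i - a/m)/(1-a))_i) - H_α(p)` for `α > 1`. -/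
theorem deltaTilde_limits {m : ℕ} (p q : Fin m → ℝ)
    (hp : IsProbDist p) (hq : IsProbDist q)
    (hp_rank : ∀ i, p i ≠ 0) (hq_rank : ∀ i, q i ≠ 0)
    (a : ℝ) (ha : 0 < a) (ha' : a < (m : ℝ) * ⨅ i, q i) :
    (∀ α : ℝ, α < 0 →
      Filter.Tendsto (deltaTilde p q a α) Filter.atTop
        (nhds (-Real.log m - renyi α p))) ∧
    (∀ α : ℝ, 0 < α → α < 1 →
      Filter.Tendsto (deltaTilde p q a α) Filter.atTop
        (nhds (Real.log m - renyi α p))) ∧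
    (∀ α : ℝ, 1 < α →
      Filter.Tendsto (deltaTilde p q a α) Filter.atTop
        (nhds (renyi α (fun i => (q i - a / (m : ℝ)) / (1 - a)) - renyi α p))) :=
  deltaTilde_limits_general p q hq a ha ha'
end

section
/- Let S : Δ⁺ → ℝ be symmetric, additive, and subadditive. Then S(p) ≤ S(η_m) for every p ∈ Δ_m⁺ and every m ∈ ℕ. -/
open scoped BigOperators

/-!
Couple `p` with the uniform distribution `η` through the cyclic shift: `P(i, j) = p(j - i) / m`
on `ℤ/m × ℤ/m`. Both marginals of `P` are uniform, and `P` is a rearrangement of `η ⊗ p`. Hence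
symmetry and additivity give `S(P) = S(η) + S(p)`, while subadditivity and additivity give
`S(P) ≤ S(η ⊗ η) = 2 S(η)`.
-/

open Finset

namespace IsPosProbDist

variable {ι κ : Type*} [Fintype ι] [Fintype κ]

theorem nonempty {p : ι → ℝ} (hp : IsPosProbDist p) : Nonempty ι := by
  by_contra h
  rw [not_nonempty_iff] at h
  simpa using hp.2

theorem uniform [Nonempty ι] : IsPosProbDist fun _ : ι => 1 / (Fintype.card ι : ℝ) :=
  ⟨fun _ => by positivity, by simp⟩

theorem comp_equiv {p : ι → ℝ} (hp : IsPosProbDist p) (e : κ ≃ ι) : IsPosProbDist (p ∘ e) :=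
  ⟨fun k => hp.1 (e k), by rw [← hp.2]; exact e.sum_comp p⟩

theorem kron {p : ι → ℝ} {q : κ → ℝ} (hp : IsPosProbDist p) (hq : IsPosProbDist q) :
    IsPosProbDist (kron p q) :=
  ⟨fun x => mul_pos (hp.1 x.1) (hq.1 x.2), by
    simp only [_root_.kron, Fintype.sum_prod_type, ← mul_sum, hq.2, mul_one, hp.2]⟩

theorem sum_snd {P : ι × κ → ℝ} (hP : IsPosProbDist P) :
    IsPosProbDist fun i => ∑ j, P (i, j) :=
  have : Nonempty κ := hP.nonempty.map Prod.snd
  ⟨fun i => sum_pos (fun j _ => hP.1 (i, j)) univ_nonempty, by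
    rw [← hP.2, Fintype.sum_prod_type]⟩

theorem sum_fst {P : ι × κ → ℝ} (hP : IsPosProbDist P) :
    IsPosProbDist fun j => ∑ i, P (i, j) :=
  have : Nonempty ι := hP.nonempty.map Prod.fst
  ⟨fun j => sum_pos (fun i _ => hP.1 (i, j)) univ_nonempty, by
    rw [← hP.2, Fintype.sum_prod_type_right]⟩

end IsPosProbDist

section EntropyLike

variable {S : ∀ n : ℕ, (Fin n → ℝ) → ℝ} {m n : ℕ}

theorem SymmetricS.apply_comp_perm (hsym : SymmetricS S) {P : Fin m × Fin n → ℝ}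
    (hP : IsPosProbDist P) (τ : Equiv.Perm (Fin m × Fin n)) :
    S (m * n) (fun x => P (τ (finProdFinEquiv.symm x))) =
      S (m * n) (fun x => P (finProdFinEquiv.symm x)) := by
  simpa only [Function.comp_def, Equiv.trans_apply, Equiv.symm_apply_apply] using
    hsym _ _ (hP.comp_equiv finProdFinEquiv.symm)
      (finProdFinEquiv.symm.trans (τ.trans finProdFinEquiv))

theorem SubadditiveS.le_add_marginals (hsub : SubadditiveS S) (hadd : AdditiveS S)
    {P : Fin m × Fin n → ℝ} (hP : IsPosProbDist P) :
    S (m * n) (fun x => P (finProdFinEquiv.symm x)) ≤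
      S m (fun i => ∑ j, P (i, j)) + S n (fun j => ∑ i, P (i, j)) :=
  (hsub m n P hP).trans_eq (hadd m n _ _ hP.sum_snd hP.sum_fst)

end EntropyLike

section CyclicCoupling

variable {G : Type*} [AddGroup G] [Fintype G]

noncomputable def cyclicCoupling (p : G → ℝ) : G × G → ℝ :=
  fun x => p (x.2 - x.1) / Fintype.card G

theorem cyclicCoupling_eq_kron_comp (p : G → ℝ) :
    cyclicCoupling p =
      kron (fun _ => 1 / (Fintype.card G : ℝ)) p ∘ Equiv.prodShear (.refl G) Equiv.subRight := by
  ext x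
  simp [cyclicCoupling, kron, div_eq_inv_mul]

theorem sum_cyclicCoupling_snd {p : G → ℝ} (hp : ∑ g, p g = 1) (g : G) :
    ∑ h, cyclicCoupling p (g, h) = 1 / Fintype.card G := by
  simp only [cyclicCoupling, ← sum_div, ← hp]
  congr 1
  exact (Equiv.subRight g).sum_comp p

theorem sum_cyclicCoupling_fst {p : G → ℝ} (hp : ∑ g, p g = 1) (h : G) :
    ∑ g, cyclicCoupling p (g, h) = 1 / Fintype.card G := by
  simp only [cyclicCoupling, ← sum_div, ← hp]
  congr 1
  exact (Equiv.subLeft h).sum_comp p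

end CyclicCoupling

/-- If `S` is symmetric, additive and subadditive on the positive
distributions, then `S(p) ≤ S(η_m)` for every `p ∈ Δ_m⁺`. -/
theorem uniform_maximizes (S : ∀ n : ℕ, (Fin n → ℝ) → ℝ)
    (hsym : SymmetricS S) (hadd : AdditiveS S) (hsub : SubadditiveS S)
    (m : ℕ) (p : Fin m → ℝ) (hp : IsPosProbDist p) :
    S m p ≤ S m (fun _ => 1 / (m : ℝ)) := by
  have : NeZero m := ⟨Fin.pos_iff_nonempty.2 hp.nonempty |>.ne'⟩
  have hη : IsPosProbDist fun _ : Fin m => 1 / (m : ℝ) := by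
    simpa using IsPosProbDist.uniform (ι := Fin m)
  have hP : IsPosProbDist (cyclicCoupling p) := by
    rw [cyclicCoupling_eq_kron_comp, Fintype.card_fin]
    exact (hη.kron hp).comp_equiv _
  have h_rearranged : S (m * m) (fun x => cyclicCoupling p (finProdFinEquiv.symm x)) =
      S m (fun _ => 1 / (m : ℝ)) + S m p := by
    rw [cyclicCoupling_eq_kron_comp, Fintype.card_fin]
    simpa using (hsym.apply_comp_perm (hη.kron hp) (.prodShear (.refl _) Equiv.subRight)).trans
      (hadd m m _ p hη hp)
  have h_sub := hsub.le_add_marginals hadd hP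
  simp only [sum_cyclicCoupling_snd hp.2, sum_cyclicCoupling_fst hp.2, Fintype.card_fin]
    at h_sub
  linarith
end
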